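/- Let B be a strictly increasing CDF with values in (0,1), g a probability density with full support, p ∈ ℝ, and b_L < 0 ≤ b_R. Define D̃(r) = ∫_{γ ∉ [−b_R,−b_L]} (r B(−p−γ−b_R) − (1−r) B(−p+γ+b_L)) g(γ) dγ. Then D̃ is strictly increasing in r, D̃(0) < 0, D̃(1) > 0, so there is a unique r** ∈ (0,1) with D̃(r) > 0 if and only if r > r**. -/

import Mathlib

/-!
The integrand of `D̃(r)` is affine in `r`, so `D̃(r) = r a - (1 - r) c` with
`a = ∫_S B(-p-γ-b_R) g` and `c = ∫_S B(-p+γ+b_L) g` over `S = [-b_R, -b_L]ᶜ`.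
Both are positive since the integrands are positive and `S` has infinite Lebesgue measure,
so `D̃` is strictly increasing with its unique zero at `r** = c / (a + c) ∈ (0, 1)`.
-/

open MeasureTheory Set

section Affine

variable {f : ℝ → ℝ} {a c : ℝ}

theorem strictMono_of_eq_mul_sub_one_sub_mul (ha : 0 < a) (hc : 0 < c)
    (hf : ∀ r, f r = r * a - (1 - r) * c) : StrictMono f := by
  intro x y hxy
  simp only [hf]
  nlinarith

theorem pos_iff_gt_div_of_eq_mul_sub_one_sub_mul (ha : 0 < a) (hc : 0 < c)
    (hf : ∀ r, f r = r * a - (1 - r) * c) (r : ℝ) : f r > 0 ↔ r > c / (a + c) := by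
  rw [hf, gt_iff_lt, gt_iff_lt, div_lt_iff₀ (by positivity)]
  constructor <;> intro h <;> linarith

theorem sign_properties_of_eq_mul_sub_one_sub_mul (ha : 0 < a) (hc : 0 < c)
    (hf : ∀ r, f r = r * a - (1 - r) * c) :
    StrictMono f ∧ f 0 < 0 ∧ f 1 > 0 ∧
      ∃! t : ℝ, t ∈ Ioo (0 : ℝ) 1 ∧ ∀ r : ℝ, f r > 0 ↔ r > t := by
  have hpos := pos_iff_gt_div_of_eq_mul_sub_one_sub_mul ha hc hf
  refine ⟨strictMono_of_eq_mul_sub_one_sub_mul ha hc hf, by rw [hf]; linarith,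
    by rw [hf]; linarith, c / (a + c), ⟨⟨by positivity, ?_⟩, hpos⟩,
    fun t ⟨_, ht⟩ => eq_of_forall_gt_iff fun r => (ht r).symm.trans (hpos r)⟩
  rw [div_lt_one (by positivity)]
  linarith

end Affine

theorem integral_mul_sub_one_sub_mul {α : Type*} [MeasurableSpace α] {μ : Measure α}
    {F H g : α → ℝ} (hF : Integrable (fun x => F x * g x) μ)
    (hH : Integrable (fun x => H x * g x) μ) (r : ℝ) :
    ∫ x, (r * F x - (1 - r) * H x) * g x ∂μ
      = r * ∫ x, F x * g x ∂μ - (1 - r) * ∫ x, H x * g x ∂μ := by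
  rw [← integral_const_mul, ← integral_const_mul, ← integral_sub (hF.const_mul r)
    (hH.const_mul (1 - r))]
  congr 1
  ext x
  ring

theorem integral_pos_of_forall_pos {α : Type*} [MeasurableSpace α] {μ : Measure α}
    {f : α → ℝ} (hf : ∀ x, 0 < f x) (hfi : Integrable f μ) (hμ : μ ≠ 0) :
    0 < ∫ x, f x ∂μ := by
  rw [integral_pos_iff_support_of_nonneg (fun x => (hf x).le) hfi,
    Function.support_eq_univ fun x => (hf x).ne']
  exact Measure.measure_univ_pos.mpr hμ

theorem Real.volume_restrict_compl_Icc_ne_zero (u v : ℝ) :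
    volume.restrict (Icc u v)ᶜ ≠ 0 := by
  rw [Ne, Measure.restrict_eq_zero]
  have hIoi : Ioi v ⊆ (Icc u v)ᶜ := fun x (hx : v < x) => not_and.mpr fun _ => not_le.mpr hx
  exact (lt_of_lt_of_le (by simp [Real.volume_Ioi]) (measure_mono hIoi)).ne'

theorem stmt_10_general (B g : ℝ → ℝ) (hB01 : ∀ z, 0 < B z ∧ B z < 1)
    (hgpos : ∀ x, 0 < g x)
    (p bL bR : ℝ)
    (hi1 : Integrable (fun γ => B (-p - γ - bR) * g γ))
    (hi2 : Integrable (fun γ => B (-p + γ + bL) * g γ)) :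
    StrictMono (fun r : ℝ =>
        ∫ γ in (Icc (-bR) (-bL))ᶜ, (r * B (-p - γ - bR) - (1 - r) * B (-p + γ + bL)) * g γ) ∧
    (∫ γ in (Icc (-bR) (-bL))ᶜ,
        ((0:ℝ) * B (-p - γ - bR) - (1 - 0) * B (-p + γ + bL)) * g γ) < 0 ∧
    (∫ γ in (Icc (-bR) (-bL))ᶜ,
        ((1:ℝ) * B (-p - γ - bR) - (1 - 1) * B (-p + γ + bL)) * g γ) > 0 ∧
    ∃! rss : ℝ, rss ∈ Ioo (0 : ℝ) 1 ∧
      ∀ r : ℝ,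
        (∫ γ in (Icc (-bR) (-bL))ᶜ,
            (r * B (-p - γ - bR) - (1 - r) * B (-p + γ + bL)) * g γ) > 0
          ↔ r > rss := by
  have hS := Real.volume_restrict_compl_Icc_ne_zero (-bR) (-bL)
  have ha : 0 < ∫ γ in (Icc (-bR) (-bL))ᶜ, B (-p - γ - bR) * g γ :=
    integral_pos_of_forall_pos (fun γ => mul_pos (hB01 _).1 (hgpos γ)) hi1.integrableOn hS
  have hc : 0 < ∫ γ in (Icc (-bR) (-bL))ᶜ, B (-p + γ + bL) * g γ :=
    integral_pos_of_forall_pos (fun γ => mul_pos (hB01 _).1 (hgpos γ)) hi2.integrableOn hS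
  exact sign_properties_of_eq_mul_sub_one_sub_mul ha hc
    (integral_mul_sub_one_sub_mul hi1.integrableOn hi2.integrableOn)

/-- The non-binding referendum net benefit D̃(r) (parties initially mis-aligned,
b_L < 0 ≤ b_R) is strictly increasing, negative at 0, positive at 1, with a unique
interior threshold r**. -/
theorem stmt_10 (B g : ℝ → ℝ) (hBm : StrictMono B) (hB01 : ∀ z, 0 < B z ∧ B z < 1)
    (hgpos : ∀ x, 0 < g x) (hg1 : ∫ x, g x = 1) (hgi : Integrable g)
    (p bL bR : ℝ) (h1 : bL < 0) (h2 : 0 ≤ bR)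
    (hi1 : Integrable (fun γ => B (-p - γ - bR) * g γ))
    (hi2 : Integrable (fun γ => B (-p + γ + bL) * g γ)) :
    StrictMono (fun r : ℝ =>
        ∫ γ in (Icc (-bR) (-bL))ᶜ, (r * B (-p - γ - bR) - (1 - r) * B (-p + γ + bL)) * g γ) ∧
    (∫ γ in (Icc (-bR) (-bL))ᶜ,
        ((0:ℝ) * B (-p - γ - bR) - (1 - 0) * B (-p + γ + bL)) * g γ) < 0 ∧
    (∫ γ in (Icc (-bR) (-bL))ᶜ,
        ((1:ℝ) * B (-p - γ - bR) - (1 - 1) * B (-p + γ + bL)) * g γ) > 0 ∧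
    ∃! rss : ℝ, rss ∈ Ioo (0 : ℝ) 1 ∧
      ∀ r : ℝ,
        (∫ γ in (Icc (-bR) (-bL))ᶜ,
            (r * B (-p - γ - bR) - (1 - r) * B (-p + γ + bL)) * g γ) > 0
          ↔ r > rss :=
  stmt_10_general B g hB01 hgpos p bL bR hi1 hi2
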